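/- Evaluation formula (3.18) for the Dunkl–Cherednik operator: for every Laurent polynomial f ∈ F[U,U^{−1}] and every integer N ≥ 1, (𝒴f)(−q^{2N}) = −t₁ q^{−2N} f(−q^{2N}) − t̄₁ ∑_{p=0}^{N−1} q^{−2p} f(−q^{2(2p−N)}) + t̄₂ ∑_{p=0}^{N−1} q^{−2p−1} f(−q^{2(2p−N+1)}), where g(c) denotes the evaluation of g ∈ F[U,U^{−1}] at U = c. -/

import Mathlib

noncomputable section

open LaurentPolynomial

/-- The field `F = ℚ(q, t₁, t₂)` of rational functions in three indeterminates. -/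
abbrev F : Type := FractionRing (MvPolynomial (Fin 3) ℚ)

def q : F := algebraMap (MvPolynomial (Fin 3) ℚ) F (MvPolynomial.X 0)
def t1 : F := algebraMap (MvPolynomial (Fin 3) ℚ) F (MvPolynomial.X 1)
def t2 : F := algebraMap (MvPolynomial (Fin 3) ℚ) F (MvPolynomial.X 2)

/-- `a_k = (t̄₁ − t̄₂ q^{2k−1})/(1 − q^{4k−2})`. -/
def aop (k : ℤ) : F :=
  ((t1 - t1⁻¹) - (t2 - t2⁻¹) * q ^ (2 * k - 1)) / (1 - q ^ (4 * k - 2))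

/-- Evaluation of a Laurent polynomial `f ∈ F[U,U⁻¹]` at a point `c ∈ F`
(sending the monomial `U^k` to `c^k`). -/
def evalL (c : F) (f : LaurentPolynomial F) : F := Finsupp.sum (AddMonoidAlgebra.coeff f) fun k r => r * c ^ k

/-!
Both sides are `F`-linear in `f`, so it suffices to take `f = U^k`. Put `x = -q^{2N}` and
`r = q^{4k-2}`. The evaluation points of the two sums are `x⁻¹ q^{2(2p+e)}` with `e = 0, 1`, so at
`U^k` their `p`-th terms are `x^{-k} r^p` and `q^{2k-1} x^{-k} r^p`: both sums are geometric.
Likewise `x^{k-1} + x^{-k} = x^{-k} (1 - r^N)`. After multiplying by `1 - r`, which is nonzero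
because `q` is not a root of unity, the identity becomes `a_k (1 - r) = t̄₁ - t̄₂ q^{2k-1}`.
-/

section Powers

variable {K : Type*} [Field K] {u : K}

lemma neg_zpow_eq_neg_one_zpow_mul (a : K) (k : ℤ) : (-a) ^ k = (-1) ^ k * a ^ k := by
  rw [neg_eq_neg_one_mul, mul_zpow]

lemma zpow_mul_neg_zpow_node (hu : u ≠ 0) (N p : ℕ) (k e : ℤ) :
    u ^ (-(2 * (p : ℤ)) - e) * (-(u ^ (2 * (2 * (p : ℤ) - N + e)))) ^ k =
      u ^ ((2 * k - 1) * e) * (-(u ^ (2 * (N : ℤ)))) ^ (-k) * (u ^ (4 * k - 2)) ^ p := by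
  rw [← inv_zpow', inv_neg, neg_zpow_eq_neg_one_zpow_mul (u ^ _)⁻¹,
    neg_zpow_eq_neg_one_zpow_mul (u ^ _), ← zpow_neg, ← zpow_natCast (u ^ _), ← zpow_mul,
    ← zpow_mul, ← zpow_mul]
  simp only [mul_assoc, mul_left_comm _ ((-1 : K) ^ k), ← zpow_add₀ hu]
  ring_nf

lemma sum_zpow_mul_neg_zpow_nodes (hu : u ≠ 0) (N : ℕ) (k e : ℤ) :
    ∑ p ∈ Finset.range N, u ^ (-(2 * (p : ℤ)) - e) * (-(u ^ (2 * (2 * (p : ℤ) - N + e)))) ^ k =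
      u ^ ((2 * k - 1) * e) * (-(u ^ (2 * (N : ℤ)))) ^ (-k) *
        ∑ p ∈ Finset.range N, (u ^ (4 * k - 2)) ^ p := by
  simp only [zpow_mul_neg_zpow_node hu, Finset.mul_sum]

lemma neg_zpow_sub_one_add_neg_zpow_neg (hu : u ≠ 0) (N : ℕ) (k : ℤ) :
    (-(u ^ (2 * (N : ℤ)))) ^ (k - 1) + (-(u ^ (2 * (N : ℤ)))) ^ (-k) =
      (-(u ^ (2 * (N : ℤ)))) ^ (-k) * (1 - (u ^ (4 * k - 2)) ^ N) := by
  have hx : -(u ^ (2 * (N : ℤ))) ≠ 0 := neg_ne_zero.mpr (zpow_ne_zero _ hu)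
  have hodd : Odd (2 * k - 1) := ⟨k - 1, by ring⟩
  rw [show k - 1 = -k + (2 * k - 1) by ring, zpow_add₀ hx, hodd.neg_zpow, ← zpow_mul,
    ← zpow_natCast, ← zpow_mul, mul_comm (4 * k - 2)]
  ring_nf

end Powers

lemma q_ne_zero : q ≠ 0 :=
  (map_ne_zero_iff _ (IsFractionRing.injective _ F)).mpr (MvPolynomial.X_ne_zero 0)

lemma q_pow_ne_one {n : ℕ} (hn : n ≠ 0) : q ^ n ≠ 1 := by
  rw [q, ← map_pow, ← map_one (algebraMap (MvPolynomial (Fin 3) ℚ) F),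
    (IsFractionRing.injective _ F).ne_iff]
  intro h
  simpa [zero_pow hn] using congrArg MvPolynomial.constantCoeff h

lemma q_zpow_ne_one {m : ℤ} (hm : m ≠ 0) : q ^ m ≠ 1 := by
  obtain ⟨n, rfl | rfl⟩ := Int.eq_nat_or_neg m
  · rw [zpow_natCast]
    exact q_pow_ne_one (by omega)
  · rw [zpow_neg, zpow_natCast, ne_eq, inv_eq_one]
    exact q_pow_ne_one (by omega)

lemma aop_mul_one_sub (k : ℤ) :
    aop k * (1 - q ^ (4 * k - 2)) = (t1 - t1⁻¹) - (t2 - t2⁻¹) * q ^ (2 * k - 1) :=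
  div_mul_cancel₀ _ (sub_ne_zero.mpr (q_zpow_ne_one (by omega)).symm)

theorem evaluation_formula_monomial (N : ℕ) (k : ℤ) :
    t1 * (-(q ^ (2 * (N : ℤ)))) ^ (k - 1)
      - aop k * ((-(q ^ (2 * (N : ℤ)))) ^ (k - 1) + (-(q ^ (2 * (N : ℤ)))) ^ (-k)) =
    -t1 * q ^ (-(2 * (N : ℤ))) * (-(q ^ (2 * (N : ℤ)))) ^ k
      - (t1 - t1⁻¹) * ∑ p ∈ Finset.range N,
          q ^ (-(2 * (p : ℤ))) * (-(q ^ (2 * (2 * (p : ℤ) - (N : ℤ))))) ^ k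
      + (t2 - t2⁻¹) * ∑ p ∈ Finset.range N,
          q ^ (-(2 * (p : ℤ)) - 1) * (-(q ^ (2 * (2 * (p : ℤ) - (N : ℤ) + 1)))) ^ k := by
  have hx : -(q ^ (2 * (N : ℤ))) ≠ 0 := neg_ne_zero.mpr (zpow_ne_zero _ q_ne_zero)
  have heven := sum_zpow_mul_neg_zpow_nodes q_ne_zero N k 0
  have hodd := sum_zpow_mul_neg_zpow_nodes q_ne_zero N k 1
  simp only [sub_zero, add_zero, mul_zero, zpow_zero, one_mul, mul_one] at heven hodd
  rw [heven, hodd, neg_zpow_sub_one_add_neg_zpow_neg q_ne_zero, zpow_sub_one₀ hx, inv_neg,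
    ← zpow_neg]
  linear_combination
    (-(-(q ^ (2 * (N : ℤ)))) ^ (-k) * ∑ p ∈ Finset.range N, (q ^ (4 * k - 2)) ^ p) *
      aop_mul_one_sub k +
    ((-(q ^ (2 * (N : ℤ)))) ^ (-k) * aop k) * geom_sum_mul_neg (q ^ (4 * k - 2)) N

def evalLinear (c : F) : LaurentPolynomial F →ₗ[F] F :=
  (AddMonoidAlgebra.basis ℤ F).constr F (c ^ ·)

lemma evalL_eq_evalLinear (c : F) (f : LaurentPolynomial F) : evalL c f = evalLinear c f := by
  rw [evalLinear, Module.Basis.constr_apply]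
  rfl

lemma evalLinear_T (c : F) (k : ℤ) : evalLinear c (T k) = c ^ k :=
  (AddMonoidAlgebra.basis ℤ F).constr_basis F _ k

theorem evaluation_formula_Dunkl_Cherednik_general
    (Y : Module.End F (LaurentPolynomial F))
    (hY : ∀ k : ℤ, Y (T k) = t1 • T (k - 1) - aop k • (T (k - 1) + T (-k)))
    (f : LaurentPolynomial F) (N : ℕ) :
    evalL (-(q ^ (2 * (N : ℤ)))) (Y f) =
      -t1 * q ^ (-(2 * (N : ℤ))) * evalL (-(q ^ (2 * (N : ℤ)))) f
      - (t1 - t1⁻¹) * ∑ p ∈ Finset.range N,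
          q ^ (-(2 * (p : ℤ))) * evalL (-(q ^ (2 * (2 * (p : ℤ) - (N : ℤ))))) f
      + (t2 - t2⁻¹) * ∑ p ∈ Finset.range N,
          q ^ (-(2 * (p : ℤ)) - 1) * evalL (-(q ^ (2 * (2 * (p : ℤ) - (N : ℤ) + 1)))) f := by
  have hfunctional : evalLinear (-(q ^ (2 * (N : ℤ)))) ∘ₗ Y =
      (-t1 * q ^ (-(2 * (N : ℤ)))) • evalLinear (-(q ^ (2 * (N : ℤ))))
      - (t1 - t1⁻¹) • ∑ p ∈ Finset.range N,
          q ^ (-(2 * (p : ℤ))) • evalLinear (-(q ^ (2 * (2 * (p : ℤ) - (N : ℤ)))))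
      + (t2 - t2⁻¹) • ∑ p ∈ Finset.range N,
          q ^ (-(2 * (p : ℤ)) - 1) • evalLinear (-(q ^ (2 * (2 * (p : ℤ) - (N : ℤ) + 1)))) := by
    refine (AddMonoidAlgebra.basis ℤ F).ext fun k => ?_
    rw [show AddMonoidAlgebra.basis ℤ F k = T k from rfl]
    simp only [hY, map_sub, map_add, map_smul, evalLinear_T, smul_eq_mul, LinearMap.comp_apply,
      LinearMap.add_apply, LinearMap.sub_apply, LinearMap.smul_apply, LinearMap.sum_apply]
    exact evaluation_formula_monomial N k
  simpa only [evalL_eq_evalLinear, LinearMap.comp_apply, smul_eq_mul, LinearMap.add_apply,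
    LinearMap.sub_apply, LinearMap.smul_apply, LinearMap.sum_apply]
    using LinearMap.congr_fun hfunctional f

theorem evaluation_formula_Dunkl_Cherednik
    (Y : Module.End F (LaurentPolynomial F))
    (hY : ∀ k : ℤ, Y (T k) = t1 • T (k - 1) - aop k • (T (k - 1) + T (-k)))
    (f : LaurentPolynomial F) (N : ℕ) (hN : 1 ≤ N) :
    evalL (-(q ^ (2 * (N : ℤ)))) (Y f) =
      -t1 * q ^ (-(2 * (N : ℤ))) * evalL (-(q ^ (2 * (N : ℤ)))) f
      - (t1 - t1⁻¹) * ∑ p ∈ Finset.range N,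
          q ^ (-(2 * (p : ℤ))) * evalL (-(q ^ (2 * (2 * (p : ℤ) - (N : ℤ))))) f
      + (t2 - t2⁻¹) * ∑ p ∈ Finset.range N,
          q ^ (-(2 * (p : ℤ)) - 1) * evalL (-(q ^ (2 * (2 * (p : ℤ) - (N : ℤ) + 1)))) f :=
  evaluation_formula_Dunkl_Cherednik_general Y hY f N

end
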